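/- Let G be a graph, let Q be a clique separator of G^+ and let M be the Q-attachedness graph of G^+. Then M contains no full antipodal triangle and no induced color-preserving copy of W^{(0)}_{2k+1} for any k ≥ 1 if and only if M contains no induced color-preserving copy of W^{(0)}_{2k+1} for any k ≥ 1; equivalently, if M contains no induced color-preserving copy of W^{(0)}_3, then M contains no full antipodal triangle. -/
import Mathlib


namespace PathGraphs

open SimpleGraph Set

variable {V : Type}

/-- `G` is a path graph: the intersection graph of a family of paths of a finite tree. -/
def IsPathGraph [Fintype V] (G : SimpleGraph V) : Prop :=
  ∃ (W : Type) (_ : Fintype W) (T : SimpleGraph W) (_ : T.IsTree)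
    (a b : V → W) (P : (v : V) → T.Walk (a v) (b v)),
    (∀ v, (P v).IsPath) ∧
    ∀ u v : V, u ≠ v → (G.Adj u v ↔ ∃ w, w ∈ (P u).support ∧ w ∈ (P v).support)

/-- Chordal: no induced cycle of length at least 4. -/
def IsChordal (G : SimpleGraph V) : Prop :=
  ∀ (n : ℕ) (f : Fin n → V), 4 ≤ n → Function.Injective f →
    ¬ (∀ i j : Fin n,
        G.Adj (f i) (f j) ↔ ((i : ℕ) + 1) % n = (j : ℕ) ∨ ((j : ℕ) + 1) % n = (i : ℕ))

/-- A maximal clique of `G` (as a set of vertices). -/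
def IsMaxClique (G : SimpleGraph V) (Q : Set V) : Prop :=
  G.IsClique Q ∧ ∀ R : Set V, G.IsClique R → Q ⊆ R → R = Q

/-- `Q` is a clique separator of `G`: a maximal clique whose removal disconnects `G`. -/
def IsCliqueSeparator (G : SimpleGraph V) (Q : Set V) : Prop :=
  IsMaxClique G Q ∧ ¬ (G.induce Qᶜ).Preconnected

/-- The members of `Γ_Q`, identified with the connected components of `G − Q`. -/
abbrev Gamma (G : SimpleGraph V) (Q : Set V) := (G.induce Qᶜ).ConnectedComponent

/-- The vertex set of the member `γ = G[V_i ∪ Q]` of `Γ_Q` corresponding to component `c`. -/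
def compSet (G : SimpleGraph V) (Q : Set V) (c : Gamma G Q) : Set V :=
  {v : V | ∃ h : v ∈ Qᶜ, (G.induce Qᶜ).connectedComponentMk ⟨v, h⟩ = c} ∪ Q

/-- `K` is a maximal clique of the subgraph of `G` induced on `S`. -/
def IsMaxCliqueWithin (G : SimpleGraph V) (S K : Set V) : Prop :=
  K ⊆ S ∧ G.IsClique K ∧ ∀ R : Set V, R ⊆ S → G.IsClique R → K ⊆ R → R = K

/-- `K` is a relevant clique of the member of `Γ_Q` given by component `c`. -/
def RelevantClique (G : SimpleGraph V) (Q : Set V) (c : Gamma G Q) (K : Set V) : Prop :=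
  IsMaxCliqueWithin G (compSet G Q c) K ∧ (K ∩ Q).Nonempty ∧ K ≠ Q

/-- `c` is a neighboring subgraph of the vertex `v ∈ Q`. -/
def NeighboringOf (G : SimpleGraph V) (Q : Set V) (c : Gamma G Q) (v : V) : Prop :=
  v ∈ Q ∧ ∃ K, RelevantClique G Q c K ∧ v ∈ K

/-- `c, c', c''` form a neighboring triple (all neighboring subgraphs of one vertex of `Q`). -/
def NeighboringTriple (G : SimpleGraph V) (Q : Set V) (c c' c'' : Gamma G Q) : Prop :=
  ∃ v, NeighboringOf G Q c v ∧ NeighboringOf G Q c' v ∧ NeighboringOf G Q c'' v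

/-- Attachedness `c ⋈ c'`. -/
def Attached (G : SimpleGraph V) (Q : Set V) (c c' : Gamma G Q) : Prop :=
  ∃ K K', RelevantClique G Q c K ∧ RelevantClique G Q c' K' ∧ (K ∩ K' ∩ Q).Nonempty

/-- Dominance `c ≤ c'`. -/
def Dominates (G : SimpleGraph V) (Q : Set V) (c c' : Gamma G Q) : Prop :=
  Attached G Q c c' ∧ ∀ K', RelevantClique G Q c' K' →
    (∀ K, RelevantClique G Q c K → K ∩ Q ⊆ K' ∩ Q) ∨
    (∀ K, RelevantClique G Q c K → K ∩ K' ∩ Q = ∅)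

/-- Antipodality `c ↔ c'`. -/
def Antipodal (G : SimpleGraph V) (Q : Set V) (c c' : Gamma G Q) : Prop :=
  ∃ K K', RelevantClique G Q c K ∧ RelevantClique G Q c' K' ∧ (K ∩ K' ∩ Q).Nonempty ∧
    ¬ K ∩ Q ⊆ K' ∩ Q ∧ ¬ K' ∩ Q ⊆ K ∩ Q

/-- `Γ_Q` has a full antipodal triple: a neighboring triple of three (distinct) members
which are pairwise antipodal. -/
def HasFullAntipodalTriple (G : SimpleGraph V) (Q : Set V) : Prop :=
  ∃ c c' c'' : Gamma G Q, c ≠ c' ∧ c ≠ c'' ∧ c' ≠ c'' ∧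
    NeighboringTriple G Q c c' c'' ∧
    Antipodal G Q c c' ∧ Antipodal G Q c c'' ∧ Antipodal G Q c' c''

/-- A full antipodal triangle of the `Q`-attachedness graph (its edges being antipodal
edges, i.e. pairs of distinct antipodal members, and its vertices a neighboring triple). -/
def HasFullAntipodalTriangle (G : SimpleGraph V) (Q : Set V) : Prop :=
  ∃ c c' c'' : Gamma G Q, c ≠ c' ∧ c ≠ c'' ∧ c' ≠ c'' ∧
    NeighboringTriple G Q c c' c'' ∧
    Antipodal G Q c c' ∧ Antipodal G Q c c'' ∧ Antipodal G Q c' c''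

/-- Conditions (i) and (ii) of a strong `Q`-coloring for a map `f : Γ_Q → ℕ`. -/
def IsStrongQColoringMap (G : SimpleGraph V) (Q : Set V) (f : Gamma G Q → ℕ) : Prop :=
  (∀ c c', Antipodal G Q c c' → f c ≠ f c') ∧
  (∀ c c' c'', NeighboringTriple G Q c c' c'' → f c = f c' ∨ f c = f c'' ∨ f c' = f c'')

/-- `G` is strong `Q`-colorable: there is `f : Γ_Q → {1, …, s}` (where `s = |Γ_Q|`)
separating antipodal pairs and taking at most two values on every neighboring triple. -/
def StrongQColorable (G : SimpleGraph V) (Q : Set V) : Prop :=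
  ∃ f : Gamma G Q → ℕ,
    (∀ c, f c ∈ Finset.Icc 1 (Nat.card (Gamma G Q))) ∧ IsStrongQColoringMap G Q f

/-- `c` is a `≤`-maximal element of `Γ_Q` (a member of `Upper_Q`). -/
def IsMaximalElem (G : SimpleGraph V) (Q : Set V) (c : Gamma G Q) : Prop :=
  ∀ c', Dominates G Q c c' → c' = c

/-- Dominance is antisymmetric (so, being reflexive and transitive, a partial order). -/
def DomAntisymm (G : SimpleGraph V) (Q : Set V) : Prop :=
  ∀ c c' : Gamma G Q, Dominates G Q c c' → Dominates G Q c' c → c = c'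

/-- `u : Fin ℓ → Γ_Q` is a fixed ordering `(u_1, …, u_ℓ)` of `Upper_Q`. -/
def IsUpperEnum (G : SimpleGraph V) (Q : Set V) (ℓ : ℕ) (u : Fin ℓ → Gamma G Q) : Prop :=
  Function.Injective u ∧ ∀ c, IsMaximalElem G Q c ↔ ∃ i, u i = c

/-- The set `D_i`: elements dominated by `u_i` and by no other upper bound. -/
def Dset (G : SimpleGraph V) (Q : Set V) {ℓ : ℕ} (u : Fin ℓ → Gamma G Q) (i : Fin ℓ) :
    Set (Gamma G Q) :=
  {c | Dominates G Q c (u i) ∧ ∀ k, k ≠ i → ¬ Dominates G Q c (u k)}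

/-- The set `D_{i,j}`: elements dominated by `u_i` and `u_j` and by no other upper bound. -/
def Dset2 (G : SimpleGraph V) (Q : Set V) {ℓ : ℕ} (u : Fin ℓ → Gamma G Q) (i j : Fin ℓ) :
    Set (Gamma G Q) :=
  {c | Dominates G Q c (u i) ∧ Dominates G Q c (u j) ∧
    ∀ k, k ≠ i → k ≠ j → ¬ Dominates G Q c (u k)}

/-- The collection `𝒟` of all the sets `D_i` and `D_{i,j}` (`i < j`). -/
def DColl (G : SimpleGraph V) (Q : Set V) {ℓ : ℕ} (u : Fin ℓ → Gamma G Q) :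
    Set (Set (Gamma G Q)) :=
  {D | (∃ i, D = Dset G Q u i) ∨ ∃ i j, i < j ∧ D = Dset2 G Q u i j}

/-- `Cross_Q`: elements of some `D ∈ 𝒟` antipodal to some element outside `D`. -/
def CrossSet (G : SimpleGraph V) (Q : Set V) {ℓ : ℕ} (u : Fin ℓ → Gamma G Q) :
    Set (Gamma G Q) :=
  {c | ∃ D ∈ DColl G Q u, c ∈ D ∧ ∃ c', c' ∉ D ∧ Antipodal G Q c c'}

/-- The restriction of `f` to `Upper_Q ∪ Cross_Q` is a partial `Q`-coloring
(colors `1, …, ℓ`; the index `i : Fin ℓ` corresponds to color `i + 1`). -/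
def IsPartialQColoring (G : SimpleGraph V) (Q : Set V) {ℓ : ℕ} (u : Fin ℓ → Gamma G Q)
    (f : Gamma G Q → ℕ) : Prop :=
  (∀ c, ((∃ i, u i = c) ∨ c ∈ CrossSet G Q u) → f c ∈ Finset.Icc 1 ℓ) ∧
  (∀ i : Fin ℓ, f (u i) = (i : ℕ) + 1) ∧
  (∀ i : Fin ℓ, ∀ c ∈ Dset G Q u i,
    (∃ c', c' ∉ Dset G Q u i ∧ Antipodal G Q c c') → f c = (i : ℕ) + 1) ∧
  (∀ i j : Fin ℓ, i < j → ∀ c ∈ Dset2 G Q u i j, ∀ c',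
    Antipodal G Q c c' → c' ∉ Dset2 G Q u i j →
      (c' ∈ Dset G Q u j → f c = (i : ℕ) + 1) ∧ (c' ∈ Dset G Q u i → f c = (j : ℕ) + 1))

/-- `G` is weak `Q`-colorable with respect to the ordering `u` of `Upper_Q`. -/
def WeakQColorable (G : SimpleGraph V) (Q : Set V) {ℓ : ℕ} (u : Fin ℓ → Gamma G Q) : Prop :=
  ∃ f : Gamma G Q → ℕ,
    (∀ c, f c ∈ Finset.Icc 1 (ℓ + 1)) ∧
    IsPartialQColoring G Q u f ∧
    (∀ i : Fin ℓ, ∀ c ∈ Dset G Q u i, f c = (i : ℕ) + 1 ∨ f c = ℓ + 1) ∧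
    (∀ i j : Fin ℓ, i < j → ∀ c ∈ Dset2 G Q u i j, f c = (i : ℕ) + 1 ∨ f c = (j : ℕ) + 1) ∧
    (∀ D ∈ DColl G Q u, ∀ c c', c ∈ D → c' ∈ D → Antipodal G Q c c' → f c ≠ f c')

/-- An antipodal edge of the `Q`-attachedness graph. -/
def AntipEdge (G : SimpleGraph V) (Q : Set V) (c c' : Gamma G Q) : Prop :=
  c ≠ c' ∧ Antipodal G Q c c'

/-- A dominance edge of the `Q`-attachedness graph. -/
def DomEdge (G : SimpleGraph V) (Q : Set V) (c c' : Gamma G Q) : Prop :=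
  c ≠ c' ∧ Attached G Q c c' ∧ ¬ Antipodal G Q c c'

/-- A color-preserving copy of `W^{(0)}_{2k+1}` in the `Q`-attachedness graph:
an antipodal `(2k+1)`-cycle plus a hub joined to every cycle vertex by a dominance edge. -/
def HasW0Copy (G : SimpleGraph V) (Q : Set V) (k : ℕ) : Prop :=
  ∃ (g : Fin (2 * k + 1) → Gamma G Q) (h : Gamma G Q),
    Function.Injective g ∧ (∀ i, h ≠ g i) ∧
    (∀ i, AntipEdge G Q (g i) (g (i + 1))) ∧
    (∀ i, DomEdge G Q h (g i))

/-- A color-preserving copy of `W^{(1)}_{2k+1}`: as `W^{(0)}_{2k+1}` but exactly one hub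
edge is antipodal. -/
def HasW1Copy (G : SimpleGraph V) (Q : Set V) (k : ℕ) : Prop :=
  ∃ (g : Fin (2 * k + 1) → Gamma G Q) (h : Gamma G Q),
    Function.Injective g ∧ (∀ i, h ≠ g i) ∧
    (∀ i, AntipEdge G Q (g i) (g (i + 1))) ∧
    AntipEdge G Q h (g 0) ∧
    (∀ i, i ≠ 0 → DomEdge G Q h (g i))

/-- A color-preserving copy of `F_{2n+1}`: an antipodal path on `2n` vertices plus a hub
joined to every path vertex by a dominance edge. -/
def HasFCopy (G : SimpleGraph V) (Q : Set V) (n : ℕ) : Prop :=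
  ∃ (g : Fin (2 * n) → Gamma G Q) (h : Gamma G Q),
    Function.Injective g ∧ (∀ i, h ≠ g i) ∧
    (∀ i j : Fin (2 * n), (j : ℕ) = (i : ℕ) + 1 → AntipEdge G Q (g i) (g j)) ∧
    (∀ i, DomEdge G Q h (g i))

/-- A color-preserving copy of `F̃_{2n+1}`: `F_{2n+1}` plus an antipodal edge joining the
two ends of the path. -/
def HasFtCopy (G : SimpleGraph V) (Q : Set V) (n : ℕ) : Prop :=
  ∃ (g : Fin (2 * n) → Gamma G Q) (h : Gamma G Q),
    Function.Injective g ∧ (∀ i, h ≠ g i) ∧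
    (∀ i j : Fin (2 * n), (j : ℕ) = (i : ℕ) + 1 → AntipEdge G Q (g i) (g j)) ∧
    (∀ i, DomEdge G Q h (g i)) ∧
    (∀ i j : Fin (2 * n), (i : ℕ) = 0 → (j : ℕ) = 2 * n - 1 → AntipEdge G Q (g i) (g j))

/-- A color-preserving copy of `DF_{2n+1}`: an antipodal `(2n+1)`-cycle together with
dominance edges joining each of the two adjacent hub vertices (at positions `0` and `1`)
to every vertex other than the two hubs and its own other cycle neighbor. -/
def HasDFCopy (G : SimpleGraph V) (Q : Set V) (n : ℕ) : Prop :=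
  ∃ g : Fin (2 * n + 1) → Gamma G Q,
    Function.Injective g ∧
    (∀ i, AntipEdge G Q (g i) (g (i + 1))) ∧
    (∀ i : Fin (2 * n + 1), (i : ℕ) ≠ 0 → (i : ℕ) ≠ 1 → (i : ℕ) ≠ 2 * n →
      DomEdge G Q (g 0) (g i)) ∧
    (∀ i : Fin (2 * n + 1), (i : ℕ) ≠ 0 → (i : ℕ) ≠ 1 → (i : ℕ) ≠ 2 →
      DomEdge G Q (g 1) (g i))

/-- An induced color-preserving copy of `W^{(0)}_{2k+1}`. -/
def HasW0Induced (G : SimpleGraph V) (Q : Set V) (k : ℕ) : Prop :=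
  ∃ (g : Fin (2 * k + 1) → Gamma G Q) (h : Gamma G Q),
    Function.Injective g ∧ (∀ i, h ≠ g i) ∧
    (∀ i, AntipEdge G Q (g i) (g (i + 1))) ∧
    (∀ i, DomEdge G Q h (g i)) ∧
    (∀ i j : Fin (2 * k + 1), i ≠ j → j ≠ i + 1 → i ≠ j + 1 →
      ¬ Attached G Q (g i) (g j))

/-- An induced color-preserving copy of `W^{(1)}_{2k+1}`. -/
def HasW1Induced (G : SimpleGraph V) (Q : Set V) (k : ℕ) : Prop :=
  ∃ (g : Fin (2 * k + 1) → Gamma G Q) (h : Gamma G Q),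
    Function.Injective g ∧ (∀ i, h ≠ g i) ∧
    (∀ i, AntipEdge G Q (g i) (g (i + 1))) ∧
    AntipEdge G Q h (g 0) ∧
    (∀ i, i ≠ 0 → DomEdge G Q h (g i)) ∧
    (∀ i j : Fin (2 * k + 1), i ≠ j → j ≠ i + 1 → i ≠ j + 1 →
      ¬ Attached G Q (g i) (g j))

/-- An induced color-preserving copy of `F_{2n+1}`. -/
def HasFInduced (G : SimpleGraph V) (Q : Set V) (n : ℕ) : Prop :=
  ∃ (g : Fin (2 * n) → Gamma G Q) (h : Gamma G Q),
    Function.Injective g ∧ (∀ i, h ≠ g i) ∧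
    (∀ i j : Fin (2 * n), (j : ℕ) = (i : ℕ) + 1 → AntipEdge G Q (g i) (g j)) ∧
    (∀ i, DomEdge G Q h (g i)) ∧
    (∀ i j : Fin (2 * n), i ≠ j → (j : ℕ) ≠ (i : ℕ) + 1 → (i : ℕ) ≠ (j : ℕ) + 1 →
      ¬ Attached G Q (g i) (g j))

/-- An induced color-preserving copy of `F̃_{2n+1}`. -/
def HasFtInduced (G : SimpleGraph V) (Q : Set V) (n : ℕ) : Prop :=
  ∃ (g : Fin (2 * n) → Gamma G Q) (h : Gamma G Q),
    Function.Injective g ∧ (∀ i, h ≠ g i) ∧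
    (∀ i j : Fin (2 * n), (j : ℕ) = (i : ℕ) + 1 → AntipEdge G Q (g i) (g j)) ∧
    (∀ i, DomEdge G Q h (g i)) ∧
    (∀ i j : Fin (2 * n), (i : ℕ) = 0 → (j : ℕ) = 2 * n - 1 → AntipEdge G Q (g i) (g j)) ∧
    (∀ i j : Fin (2 * n), i ≠ j → (j : ℕ) ≠ (i : ℕ) + 1 → (i : ℕ) ≠ (j : ℕ) + 1 →
      ¬ ((i : ℕ) = 0 ∧ (j : ℕ) = 2 * n - 1) → ¬ ((j : ℕ) = 0 ∧ (i : ℕ) = 2 * n - 1) →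
      ¬ Attached G Q (g i) (g j))

/-- An induced color-preserving copy of `DF_{2n+1}`. -/
def HasDFInduced (G : SimpleGraph V) (Q : Set V) (n : ℕ) : Prop :=
  ∃ g : Fin (2 * n + 1) → Gamma G Q,
    Function.Injective g ∧
    (∀ i, AntipEdge G Q (g i) (g (i + 1))) ∧
    (∀ i : Fin (2 * n + 1), (i : ℕ) ≠ 0 → (i : ℕ) ≠ 1 → (i : ℕ) ≠ 2 * n →
      DomEdge G Q (g 0) (g i)) ∧
    (∀ i : Fin (2 * n + 1), (i : ℕ) ≠ 0 → (i : ℕ) ≠ 1 → (i : ℕ) ≠ 2 →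
      DomEdge G Q (g 1) (g i)) ∧
    (∀ i j : Fin (2 * n + 1), 2 ≤ (i : ℕ) → 2 ≤ (j : ℕ) → i ≠ j → j ≠ i + 1 → i ≠ j + 1 →
      ¬ Attached G Q (g i) (g j))

/-- The `Q`-attachedness graph contains no copy of any graph of `𝓕₀` as a subgraph. -/
def NoF0Subgraph (G : SimpleGraph V) (Q : Set V) : Prop :=
  (∀ k, 1 ≤ k → ¬ HasW0Copy G Q k) ∧ (∀ k, 1 ≤ k → ¬ HasW1Copy G Q k) ∧
  (∀ n, 2 ≤ n → ¬ HasFCopy G Q n)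

/-- The `Q`-attachedness graph contains some graph of `𝓕₀` as a subgraph. -/
def HasSomeF0Subgraph (G : SimpleGraph V) (Q : Set V) : Prop :=
  (∃ k, 1 ≤ k ∧ HasW0Copy G Q k) ∨ (∃ k, 1 ≤ k ∧ HasW1Copy G Q k) ∨
  (∃ n, 2 ≤ n ∧ HasFCopy G Q n)

/-- The `Q`-attachedness graph contains no induced copy of any graph of `𝓕`. -/
def NoFInduced (G : SimpleGraph V) (Q : Set V) : Prop :=
  (∀ k, 1 ≤ k → ¬ HasW0Induced G Q k) ∧ (∀ k, 1 ≤ k → ¬ HasW1Induced G Q k) ∧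
  (∀ n, 2 ≤ n → ¬ HasFInduced G Q n) ∧ (∀ n, 2 ≤ n → ¬ HasFtInduced G Q n) ∧
  (∀ n, 2 ≤ n → ¬ HasDFInduced G Q n)

/-- The `Q`-attachedness graph contains some graph of `𝓕` as an induced subgraph. -/
def HasSomeFInduced (G : SimpleGraph V) (Q : Set V) : Prop :=
  (∃ k, 1 ≤ k ∧ HasW0Induced G Q k) ∨ (∃ k, 1 ≤ k ∧ HasW1Induced G Q k) ∨
  (∃ n, 2 ≤ n ∧ HasFInduced G Q n) ∨ (∃ n, 2 ≤ n ∧ HasFtInduced G Q n) ∨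
  (∃ n, 2 ≤ n ∧ HasDFInduced G Q n)

/-- The graph `G⁺`: `G` together with a pendant vertex attached to each vertex of `G`. -/
def Gplus (G : SimpleGraph V) : SimpleGraph (V ⊕ V) :=
  SimpleGraph.fromRel (fun x y =>
    match x, y with
    | Sum.inl a, Sum.inl b => G.Adj a b
    | Sum.inl a, Sum.inr b => a = b
    | _, _ => False)

section Statement16Aux

variable {G : SimpleGraph V} {Q : Set (V ⊕ V)}

lemma gplus_adj_inr {a : V} {y : V ⊕ V} :
    (Gplus G).Adj (Sum.inr a) y ↔ y = Sum.inl a := by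
  constructor
  · rintro ⟨hne, h | h⟩
    · cases y <;> simp_all
    · cases y with
      | inl b => simp_all
      | inr b => simp_all
  · rintro rfl
    exact ⟨by simp, Or.inr rfl⟩

lemma clique_subset_pair {a : V} {S : Set (V ⊕ V)} (hS : (Gplus G).IsClique S)
    (ha : Sum.inr a ∈ S) : S ⊆ {Sum.inl a, Sum.inr a} := by
  intro x hx
  rcases eq_or_ne x (Sum.inr a) with rfl | hne
  · exact Or.inr rfl
  · have := hS hx ha hne
    have : (Gplus G).Adj (Sum.inr a) x := this.symm
    exact Or.inl (gplus_adj_inr.mp this)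

lemma antipodal_symm {c c' : Gamma (Gplus G) Q} (h : Antipodal (Gplus G) Q c c') :
    Antipodal (Gplus G) Q c' c := by
  obtain ⟨K, K', h1, h2, h3, h4, h5⟩ := h
  exact ⟨K', K, h2, h1, by rwa [Set.inter_comm K' K], h5, h4⟩

/-- If the pendant vertex `inr a` belongs to `Q`, then `Q = {inl a, inr a}` and no
antipodal pair exists at all. -/
lemma no_antipodal_of_inr_mem (hQ : IsMaxClique (Gplus G) Q) {a : V}
    (ha : Sum.inr a ∈ Q) {c c' : Gamma (Gplus G) Q} :
    ¬ Antipodal (Gplus G) Q c c' := by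
  have hQpair : Q = {Sum.inl a, Sum.inr a} := by
    have h1 : Q ⊆ {Sum.inl a, Sum.inr a} := clique_subset_pair hQ.1 ha
    have hcl : (Gplus G).IsClique {Sum.inl a, Sum.inr a} := by
      intro x hx y hy hxy
      rcases hx with rfl | rfl <;> rcases hy with rfl | rfl
      · exact absurd rfl hxy
      · exact (gplus_adj_inr.mpr rfl).symm
      · exact gplus_adj_inr.mpr rfl
      · exact absurd rfl hxy
    exact (hQ.2 _ hcl h1).symm
  -- every relevant clique K of any component has K ∩ Q ⊆ {inl a}
  have key : ∀ (c0 : Gamma (Gplus G) Q) (K : Set (V ⊕ V)),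
      RelevantClique (Gplus G) Q c0 K → K ∩ Q ⊆ {Sum.inl a} := by
    rintro c0 K ⟨⟨hKsub, hKcl, hKmax⟩, hKQ, hKne⟩ y ⟨hyK, hyQ⟩
    have hyp : y = Sum.inl a ∨ y = Sum.inr a := by
      rw [hQpair] at hyQ; exact hyQ
    rcases hyp with rfl | rfl
    · rfl
    · -- inr a ∈ K forces K ⊆ Q, contradicting maximality (K ≠ Q)
      have hKpair : K ⊆ Q := by rw [hQpair]; exact clique_subset_pair hKcl hyK
      have hQsub : Q ⊆ compSet (Gplus G) Q c0 := Set.subset_union_right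
      exact absurd (hKmax Q hQsub hQ.1 hKpair).symm hKne
  rintro ⟨K, K', hK, hK', ⟨x, hx1, hx2⟩, h4, h5⟩
  obtain ⟨hx1K, hx1K'⟩ := hx1
  have hxa : x = Sum.inl a := key c K hK ⟨hx1K, hx2⟩
  apply h4
  intro z hz
  have : z = Sum.inl a := key c K hK hz
  subst this
  rw [← hxa]
  exact ⟨hx1K', hx2⟩

lemma reachable_eq_of_isolated {W : Type*} {H : SimpleGraph W} {u v : W}
    (h : ∀ y, ¬ H.Adj u y) (hr : H.Reachable u v) : u = v := by
  obtain ⟨p⟩ := hr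
  cases p with
  | nil => rfl
  | cons ha _ => exact absurd ha (h _)

/-- The main construction: a full antipodal triangle yields an induced `W⁰₃`. -/
lemma w0_of_triangle (hQ : IsCliqueSeparator (Gplus G) Q)
    (hT : HasFullAntipodalTriangle (Gplus G) Q) : HasW0Induced (Gplus G) Q 1 := by
  obtain ⟨c, c', c'', hcc', hcc'', hc'c'', ⟨v, hn, hn', hn''⟩, ha1, ha2, ha3⟩ := hT
  obtain ⟨a, rfl | ha⟩ : ∃ a, v = Sum.inl a ∨ Sum.inr a ∈ Q := by
    cases v with
    | inl a => exact ⟨a, Or.inl rfl⟩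
    | inr a => exact ⟨a, Or.inr hn.1⟩
  swap
  · exact absurd ha1 (no_antipodal_of_inr_mem hQ.1 ha)
  by_cases hra : Sum.inr a ∈ Q
  · exact absurd ha1 (no_antipodal_of_inr_mem hQ.1 hra)
  have hlaQ : Sum.inl a ∈ Q := hn.1
  -- the hub: the component of the pendant vertex `inr a`
  have hraC : Sum.inr a ∈ Qᶜ := hra
  set h : Gamma (Gplus G) Q :=
    ((Gplus G).induce Qᶜ).connectedComponentMk ⟨Sum.inr a, hraC⟩ with hdef
  -- the component of `inr a` is a singleton
  have hiso : ∀ y, ¬ ((Gplus G).induce Qᶜ).Adj ⟨Sum.inr a, hraC⟩ y := by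
    rintro ⟨y, hy⟩ hadj
    have : (Gplus G).Adj (Sum.inr a) y := hadj
    rw [gplus_adj_inr] at this
    subst this
    exact hy hlaQ
  have hcomp : compSet (Gplus G) Q h ⊆ insert (Sum.inr a) Q := by
    rintro x (⟨hx, hmk⟩ | hxQ)
    · left
      have hreach := (SimpleGraph.ConnectedComponent.eq.mp hmk)
      have := reachable_eq_of_isolated hiso hreach.symm
      exact (congrArg Subtype.val this).symm
    · exact Or.inr hxQ
  have hpaircl : (Gplus G).IsClique {Sum.inl a, Sum.inr a} := by
    intro x hx y hy hxy
    rcases hx with rfl | rfl <;> rcases hy with rfl | rfl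
    · exact absurd rfl hxy
    · exact (gplus_adj_inr.mpr rfl).symm
    · exact gplus_adj_inr.mpr rfl
    · exact absurd rfl hxy
  have hpairsub : ({Sum.inl a, Sum.inr a} : Set (V ⊕ V)) ⊆ compSet (Gplus G) Q h := by
    rintro x (rfl | rfl)
    · exact Or.inr hlaQ
    · exact Or.inl ⟨hraC, rfl⟩
  -- {inl a, inr a} is the unique relevant clique of the hub
  have hrel : RelevantClique (Gplus G) Q h {Sum.inl a, Sum.inr a} := by
    refine ⟨⟨hpairsub, hpaircl, ?_⟩, ⟨Sum.inl a, Or.inl rfl, hlaQ⟩, ?_⟩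
    · intro R hRsub hRcl hR
      apply Set.Subset.antisymm _ hR
      exact clique_subset_pair hRcl (hR (Or.inr rfl))
    · intro hEq
      exact hra (hEq ▸ (Or.inr rfl : Sum.inr a ∈ ({Sum.inl a, Sum.inr a} : Set (V ⊕ V))))
  have huniq : ∀ K, RelevantClique (Gplus G) Q h K → K = {Sum.inl a, Sum.inr a} := by
    rintro K ⟨⟨hKsub, hKcl, hKmax⟩, hKQ, hKne⟩
    have hinK : Sum.inr a ∈ K := by
      by_contra hno
      have hKQ' : K ⊆ Q := by
        intro x hx
        rcases hcomp (hKsub hx) with rfl | hxQ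
        · exact absurd hx hno
        · exact hxQ
      exact hKne (hKmax Q Set.subset_union_right hQ.1.1 hKQ').symm
    exact (hKmax _ hpairsub hpaircl (clique_subset_pair hKcl hinK)).symm
  have hpairQ : ({Sum.inl a, Sum.inr a} : Set (V ⊕ V)) ∩ Q = {Sum.inl a} := by
    apply Set.Subset.antisymm
    · rintro x ⟨rfl | rfl, hxQ⟩
      · rfl
      · exact absurd hxQ hra
    · rintro x rfl
      exact ⟨Or.inl rfl, hlaQ⟩
  -- the hub is never antipodal to anything
  have hnoant : ∀ c0 : Gamma (Gplus G) Q, ¬ Antipodal (Gplus G) Q h c0 := by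
    rintro c0 ⟨K, K', hK, hK', ⟨x, ⟨hx1, hx2⟩, hx3⟩, h4, h5⟩
    have hKeq := huniq K hK
    subst hKeq
    have hxa : x = Sum.inl a := by
      have : x ∈ ({Sum.inl a, Sum.inr a} : Set (V ⊕ V)) ∩ Q := ⟨hx1, hx3⟩
      rwa [hpairQ] at this
    apply h4
    rw [hpairQ]
    rintro z rfl
    exact hxa ▸ ⟨hx2, hx3⟩
  -- hub distinct from all triangle vertices
  have hne : ∀ c0 c1 : Gamma (Gplus G) Q, Antipodal (Gplus G) Q c0 c1 → h ≠ c0 := by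
    intro c0 c1 hant heq
    exact hnoant c1 (heq ▸ hant)
  -- the dominance edges
  have hdom : ∀ c0 : Gamma (Gplus G) Q, h ≠ c0 →
      NeighboringOf (Gplus G) Q c0 (Sum.inl a) → DomEdge (Gplus G) Q h c0 := by
    rintro c0 hne0 ⟨-, K0, hK0, haK0⟩
    refine ⟨hne0, ⟨{Sum.inl a, Sum.inr a}, K0, hrel, hK0, ⟨Sum.inl a, ⟨Or.inl rfl, haK0⟩, hlaQ⟩⟩,
      hnoant c0⟩
  -- assemble the induced W⁰₃
  refine ⟨![c, c', c''], h, ?_, ?_, ?_, ?_, ?_⟩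
  · intro i j hij
    fin_cases i <;> fin_cases j <;> simp_all
  · intro i
    fin_cases i
    · exact hne c c' ha1
    · exact hne c' c'' ha3
    · exact hne c'' c (antipodal_symm ha2)
  · intro i
    fin_cases i
    · exact ⟨hcc', ha1⟩
    · exact ⟨hc'c'', ha3⟩
    · exact ⟨hcc''.symm, antipodal_symm ha2⟩
  · intro i
    fin_cases i
    · exact hdom c (hne c c' ha1) hn
    · exact hdom c' (hne c' c'' ha3) hn'
    · exact hdom c'' (hne c'' c (antipodal_symm ha2)) hn''
  · intro i j h1 h2 h3
    exfalso
    revert h1 h2 h3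
    revert i j
    decide

end Statement16Aux

end PathGraphs
/-- Let `Q` be a clique separator of `G⁺` and `M` its `Q`-attachedness
graph. Then `M` has no full antipodal triangle and no induced copy of `W^{(0)}_{2k+1}`
(for any `k ≥ 1`) iff `M` has no induced copy of `W^{(0)}_{2k+1}` (for any `k ≥ 1`);
equivalently, if `M` has no induced copy of `W^{(0)}_3`, then `M` has no full antipodal
triangle. -/
theorem PathGraphs.statement16 {V : Type} [Fintype V] (G : SimpleGraph V)
    (Q : Set (V ⊕ V)) (hQ : IsCliqueSeparator (Gplus G) Q) :
    ((¬ HasFullAntipodalTriangle (Gplus G) Q ∧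
        ∀ k, 1 ≤ k → ¬ HasW0Induced (Gplus G) Q k) ↔
      (∀ k, 1 ≤ k → ¬ HasW0Induced (Gplus G) Q k)) ∧
    (¬ HasW0Induced (Gplus G) Q 1 → ¬ HasFullAntipodalTriangle (Gplus G) Q) := by
  
  have key : ¬ HasW0Induced (Gplus G) Q 1 → ¬ HasFullAntipodalTriangle (Gplus G) Q :=
    fun hW hT => hW (w0_of_triangle hQ hT)
  exact ⟨⟨fun hp => hp.2, fun hp => ⟨key (hp 1 le_rfl), hp⟩⟩, key⟩
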